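/- Covariance-Intersection fusion of a pair of weighted Gaussian components: let n ≥ 1, let m_a, m_b ∈ ℝ^n, let P_a, P_b be symmetric positive definite real n×n matrices, let α_a, α_b > 0, and let ω ∈ (0,1). Define P_{ab} := (ω P_a⁻¹ + (1−ω) P_b⁻¹)⁻¹, m_{ab} := P_{ab}(ω P_a⁻¹ m_a + (1−ω) P_b⁻¹ m_b), and α_{ab} := α_a^{ω} α_b^{1−ω} β(ω, P_a) β(1−ω, P_b) N(m_a − m_b; 0, P_a/ω + P_b/(1−ω)), where β(ω, P) := det(2π P ω⁻¹)^{1/2} / det(2πP)^{ω/2}. Then for every x ∈ ℝ^n, (α_a N(x; m_a, P_a))^{ω} · (α_b N(x; m_b, P_b))^{1−ω} = α_{ab} N(x; m_{ab}, P_{ab}). -/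

import Mathlib

/-!
Raising `N(x; m, P)` to the power `ω` gives `β(ω, P) N(x; m, P/ω)`, so the left-hand side is
`αₐ^ω α_b^{1-ω} β(ω, Pₐ) β(1-ω, P_b)` times the product of two Gaussians in `x` with
covariances `A = Pₐ/ω` and `B = P_b/(1-ω)`. Completing the square in `x` with precision
`A⁻¹ + B⁻¹` splits that product into `N(mₐ - m_b; 0, A + B) N(x; m_{ab}, (A⁻¹ + B⁻¹)⁻¹)`.
Both the constant term of the square and the ratio of normalising constants come from
`A (A⁻¹ + B⁻¹) B = A + B`.
-/

open Matrix

/-- The Gaussian density `N(x; m, P)` on `ℝⁿ`. -/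
noncomputable def gaussN {n : ℕ} (m : Fin n → ℝ) (P : Matrix (Fin n) (Fin n) ℝ)
    (x : Fin n → ℝ) : ℝ :=
  (((2 * Real.pi) • P).det) ^ (-(1 / 2 : ℝ)) *
    Real.exp (-(1 / 2 : ℝ) * ((x - m) ⬝ᵥ (P⁻¹ *ᵥ (x - m))))

/-- The constant `β(ω, P) = det(2πPω⁻¹)^{1/2} / det(2πP)^{ω/2}`. -/
noncomputable def gaussBeta {n : ℕ} (ω : ℝ) (P : Matrix (Fin n) (Fin n) ℝ) : ℝ :=
  (((2 * Real.pi * ω⁻¹) • P).det) ^ ((1 : ℝ) / 2) / (((2 * Real.pi) • P).det) ^ (ω / 2)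

namespace Matrix

variable {ι : Type*} [Fintype ι]

theorem IsSymm.dotProduct_mulVec_comm {R : Type*} [CommSemiring R] {M : Matrix ι ι R}
    (hM : M.IsSymm) (u v : ι → R) :
    u ⬝ᵥ M *ᵥ v = v ⬝ᵥ M *ᵥ u := by
  rw [dotProduct_mulVec, ← mulVec_transpose, hM.eq, dotProduct_comm]

/-- Completing the square, with `c` the precision-weighted mean of `a` and `b`. -/
theorem dotProduct_mulVec_add_dotProduct_mulVec {R : Type*} [CommRing R] {U V : Matrix ι ι R}
    (hU : U.IsSymm) (hV : V.IsSymm) {a b c : ι → R} (hc : (U + V) *ᵥ c = U *ᵥ a + V *ᵥ b)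
    (x : ι → R) :
    (x - a) ⬝ᵥ U *ᵥ (x - a) + (x - b) ⬝ᵥ V *ᵥ (x - b)
      = (x - c) ⬝ᵥ (U + V) *ᵥ (x - c) + (a - b) ⬝ᵥ V *ᵥ (c - b) := by
  have hbal : U *ᵥ (c - a) = -(V *ᵥ (c - b)) := by
    rw [eq_neg_iff_add_eq_zero, mulVec_sub, mulVec_sub, sub_add_sub_comm, ← add_mulVec, hc,
      sub_self]
  rw [show x - a = (x - c) + (c - a) by abel, show x - b = (x - c) + (c - b) by abel,
    show a - b = (c - b) - (c - a) by abel]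
  simp only [mulVec_add, add_mulVec, dotProduct_add, add_dotProduct, sub_dotProduct, hbal,
    dotProduct_neg, hU.dotProduct_mulVec_comm (c - a), hV.dotProduct_mulVec_comm (c - b)]
  ring

variable [DecidableEq ι]

theorem mul_inv_add_inv_mul {R : Type*} [CommRing R] {A B : Matrix ι ι R} (hA : IsUnit A.det)
    (hB : IsUnit B.det) :
    A * (A⁻¹ + B⁻¹) * B = A + B := by
  rw [Matrix.mul_add, Matrix.add_mul, mul_nonsing_inv _ hA, Matrix.one_mul, Matrix.mul_assoc,
    nonsing_inv_mul _ hB, Matrix.mul_one, add_comm]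

theorem inv_mul_inv_add_inv_inv_mul_inv {R : Type*} [CommRing R] {A B : Matrix ι ι R}
    (hA : IsUnit A.det) (hB : IsUnit B.det) : B⁻¹ * (A⁻¹ + B⁻¹)⁻¹ * A⁻¹ = (A + B)⁻¹ := by
  rw [← mul_inv_add_inv_mul hA hB, mul_inv_rev, mul_inv_rev, Matrix.mul_assoc]

theorem det_add_mul_det_inv_add_inv_inv {K : Type*} [Field K] {A B : Matrix ι ι K}
    (hA : IsUnit A.det) (hB : IsUnit B.det) (hAB : IsUnit (A⁻¹ + B⁻¹).det) :
    (A + B).det * (A⁻¹ + B⁻¹)⁻¹.det = A.det * B.det := by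
  rw [← mul_inv_add_inv_mul hA hB, det_mul, det_mul, det_nonsing_inv, Ring.inverse_eq_inv',
    mul_right_comm, mul_assoc _ _ (A⁻¹ + B⁻¹).det⁻¹, mul_inv_cancel₀ hAB.ne_zero, mul_one]

theorem inv_smul_inv {K : Type*} [Field K] {c : K} (hc : c ≠ 0) {A : Matrix ι ι K}
    (hA : IsUnit A.det) :
    (c⁻¹ • A)⁻¹ = c • A⁻¹ := by
  refine inv_eq_left_inv ?_
  rw [smul_mul_smul_comm, mul_inv_cancel₀ hc, nonsing_inv_mul _ hA, one_smul]

end Matrix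

section Gaussian

variable {n : ℕ}

theorem gaussN_nonneg {P : Matrix (Fin n) (Fin n) ℝ} (hP : P.PosDef) (m x : Fin n → ℝ) :
    0 ≤ gaussN m P x :=
  mul_nonneg (Real.rpow_nonneg (hP.smul Real.two_pi_pos).det_pos.le _) (Real.exp_pos _).le

theorem gaussN_rpow {P : Matrix (Fin n) (Fin n) ℝ} (hP : P.PosDef) {ω : ℝ} (hω : 0 < ω)
    (m x : Fin n → ℝ) :
    gaussN m P x ^ ω = gaussBeta ω P * gaussN m (ω⁻¹ • P) x := by
  unfold gaussN gaussBeta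
  rw [smul_smul, inv_smul_inv hω.ne' hP.det_pos.ne'.isUnit, smul_mulVec, dotProduct_smul,
    smul_eq_mul, ← mul_assoc]
  set d := ((2 * Real.pi) • P).det
  set dω := ((2 * Real.pi * ω⁻¹) • P).det
  have hd : 0 < d := (hP.smul Real.two_pi_pos).det_pos
  have hdω : 0 < dω := (hP.smul (mul_pos Real.two_pi_pos (inv_pos.2 hω))).det_pos
  have hcancel : dω ^ (1 / 2 : ℝ) * dω ^ (-(1 / 2) : ℝ) = 1 := by
    rw [← Real.rpow_add hdω]; norm_num
  generalize (x - m) ⬝ᵥ P⁻¹ *ᵥ (x - m) = q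
  have hpow : (d ^ (-(1 / 2) : ℝ)) ^ ω = (d ^ (ω / 2))⁻¹ := by
    rw [← Real.rpow_mul hd.le, ← Real.rpow_neg hd.le]; ring_nf
  have hexp : Real.exp (-(1 / 2) * q) ^ ω = Real.exp (-(1 / 2) * ω * q) := by
    rw [← Real.exp_mul]; ring_nf
  rw [Real.mul_rpow (Real.rpow_nonneg hd.le _) (Real.exp_pos _).le, hpow, hexp]
  calc _ = (dω ^ (1 / 2 : ℝ) * dω ^ (-(1 / 2) : ℝ))
        * ((d ^ (ω / 2))⁻¹ * Real.exp (-(1 / 2) * ω * q)) := by rw [hcancel, one_mul]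
    _ = _ := by ring_nf

theorem gaussN_mul_gaussN {A B : Matrix (Fin n) (Fin n) ℝ} (hA : A.PosDef) (hB : B.PosDef)
    (a b x : Fin n → ℝ) :
    gaussN a A x * gaussN b B x
      = gaussN 0 (A + B) (a - b)
        * gaussN ((A⁻¹ + B⁻¹)⁻¹ *ᵥ (A⁻¹ *ᵥ a + B⁻¹ *ᵥ b)) (A⁻¹ + B⁻¹)⁻¹ x := by
  set C := A⁻¹ + B⁻¹ with hC_def
  set c := C⁻¹ *ᵥ (A⁻¹ *ᵥ a + B⁻¹ *ᵥ b) with hc_def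
  have hAu := hA.det_pos.ne'.isUnit
  have hBu := hB.det_pos.ne'.isUnit
  have hCu := (hA.inv.add hB.inv).det_pos.ne'.isUnit
  have hc : C *ᵥ c = A⁻¹ *ᵥ a + B⁻¹ *ᵥ b := by
    rw [hc_def, mulVec_mulVec, mul_nonsing_inv _ hCu, one_mulVec]
  have hcb : B⁻¹ *ᵥ (c - b) = (A + B)⁻¹ *ᵥ (a - b) := by
    have hCcb : C *ᵥ (c - b) = A⁻¹ *ᵥ (a - b) := by
      rw [mulVec_sub, hc, hC_def, add_mulVec, mulVec_sub]; abel
    have hcb' : c - b = C⁻¹ *ᵥ (A⁻¹ *ᵥ (a - b)) := by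
      rw [← hCcb, mulVec_mulVec, nonsing_inv_mul _ hCu, one_mulVec]
    rw [hcb', ← inv_mul_inv_add_inv_inv_mul_inv hAu hBu, mulVec_mulVec, mulVec_mulVec]
  have hquad : (x - a) ⬝ᵥ A⁻¹ *ᵥ (x - a) + (x - b) ⬝ᵥ B⁻¹ *ᵥ (x - b)
      = (a - b) ⬝ᵥ (A + B)⁻¹ *ᵥ (a - b) + (x - c) ⬝ᵥ C *ᵥ (x - c) := by
    rw [dotProduct_mulVec_add_dotProduct_mulVec (isHermitian_iff_isSymm.1 hA.inv.1)
      (isHermitian_iff_isSymm.1 hB.inv.1) hc x, hcb, add_comm]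
  have hdet : ((2 * Real.pi) • A).det * ((2 * Real.pi) • B).det
      = ((2 * Real.pi) • (A + B)).det * ((2 * Real.pi) • C⁻¹).det := by
    simp only [det_smul]
    linear_combination
      -((2 * Real.pi) ^ Fintype.card (Fin n)) ^ 2 * det_add_mul_det_inv_add_inv_inv hAu hBu hCu
  have hdA := (hA.smul Real.two_pi_pos).det_pos
  have hdB := (hB.smul Real.two_pi_pos).det_pos
  have hdS := ((hA.add hB).smul Real.two_pi_pos).det_pos
  have hdC := ((hA.inv.add hB.inv).inv.smul Real.two_pi_pos).det_pos
  unfold gaussN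
  rw [nonsing_inv_nonsing_inv _ hCu, sub_zero]
  calc _ = (((2 * Real.pi) • A).det * ((2 * Real.pi) • B).det) ^ (-(1 / 2) : ℝ)
        * Real.exp (-(1 / 2) * ((x - a) ⬝ᵥ A⁻¹ *ᵥ (x - a) + (x - b) ⬝ᵥ B⁻¹ *ᵥ (x - b))) := by
        rw [Real.mul_rpow hdA.le hdB.le, mul_add, Real.exp_add]; ring
    _ = _ := by
        rw [hdet, hquad, Real.mul_rpow hdS.le hdC.le, mul_add, Real.exp_add]; ring

end Gaussian

theorem CI_fusion_weighted_gaussian_pair_general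
    {n : ℕ} (ma mb : Fin n → ℝ)
    (Pa Pb : Matrix (Fin n) (Fin n) ℝ) (hPa : Pa.PosDef) (hPb : Pb.PosDef)
    (αa αb : ℝ) (hαa : 0 < αa) (hαb : 0 < αb)
    (ω : ℝ) (hω : ω ∈ Set.Ioo (0 : ℝ) 1)
    (Pab : Matrix (Fin n) (Fin n) ℝ) (mab : Fin n → ℝ) (αab : ℝ)
    (hPab : Pab = (ω • Pa⁻¹ + (1 - ω) • Pb⁻¹)⁻¹)
    (hmab : mab = Pab *ᵥ (ω • (Pa⁻¹ *ᵥ ma) + (1 - ω) • (Pb⁻¹ *ᵥ mb)))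
    (hαab : αab = αa ^ ω * αb ^ (1 - ω) * gaussBeta ω Pa * gaussBeta (1 - ω) Pb *
      gaussN (0 : Fin n → ℝ) (ω⁻¹ • Pa + (1 - ω)⁻¹ • Pb) (ma - mb)) :
    ∀ x : Fin n → ℝ,
      (αa * gaussN ma Pa x) ^ ω * (αb * gaussN mb Pb x) ^ (1 - ω)
        = αab * gaussN mab Pab x := by
  intro x
  obtain ⟨hω₀, hω₁⟩ := hω
  have hω₁' : 0 < 1 - ω := sub_pos.2 hω₁
  rw [Real.mul_rpow hαa.le (gaussN_nonneg hPa ma x),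
    Real.mul_rpow hαb.le (gaussN_nonneg hPb mb x), gaussN_rpow hPa hω₀, gaussN_rpow hPb hω₁',
    hαab, hmab, hPab]
  calc _ = αa ^ ω * αb ^ (1 - ω) * gaussBeta ω Pa * gaussBeta (1 - ω) Pb
        * (gaussN ma (ω⁻¹ • Pa) x * gaussN mb ((1 - ω)⁻¹ • Pb) x) := by ring
    _ = _ := by
      rw [gaussN_mul_gaussN (hPa.smul (inv_pos.2 hω₀)) (hPb.smul (inv_pos.2 hω₁')),
        inv_smul_inv hω₀.ne' hPa.det_pos.ne'.isUnit,
        inv_smul_inv hω₁'.ne' hPb.det_pos.ne'.isUnit, smul_mulVec, smul_mulVec]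
      ring

/-- Covariance-Intersection fusion of a pair of weighted Gaussian
components: `(αₐN(x; mₐ, Pₐ))^ω (α_bN(x; m_b, P_b))^{1−ω} = α_{ab} N(x; m_{ab}, P_{ab})`
with `P_{ab} = (ωPₐ⁻¹ + (1−ω)P_b⁻¹)⁻¹`, `m_{ab} = P_{ab}(ωPₐ⁻¹mₐ + (1−ω)P_b⁻¹m_b)` and
`α_{ab} = αₐ^ω α_b^{1−ω} β(ω,Pₐ) β(1−ω,P_b) N(mₐ−m_b; 0, Pₐ/ω + P_b/(1−ω))`. -/
theorem CI_fusion_weighted_gaussian_pair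
    {n : ℕ} (hn : 1 ≤ n) (ma mb : Fin n → ℝ)
    (Pa Pb : Matrix (Fin n) (Fin n) ℝ) (hPa : Pa.PosDef) (hPb : Pb.PosDef)
    (αa αb : ℝ) (hαa : 0 < αa) (hαb : 0 < αb)
    (ω : ℝ) (hω : ω ∈ Set.Ioo (0 : ℝ) 1)
    (Pab : Matrix (Fin n) (Fin n) ℝ) (mab : Fin n → ℝ) (αab : ℝ)
    (hPab : Pab = (ω • Pa⁻¹ + (1 - ω) • Pb⁻¹)⁻¹)
    (hmab : mab = Pab *ᵥ (ω • (Pa⁻¹ *ᵥ ma) + (1 - ω) • (Pb⁻¹ *ᵥ mb)))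
    (hαab : αab = αa ^ ω * αb ^ (1 - ω) * gaussBeta ω Pa * gaussBeta (1 - ω) Pb *
      gaussN (0 : Fin n → ℝ) (ω⁻¹ • Pa + (1 - ω)⁻¹ • Pb) (ma - mb)) :
    ∀ x : Fin n → ℝ,
      (αa * gaussN ma Pa x) ^ ω * (αb * gaussN mb Pb x) ^ (1 - ω)
        = αab * gaussN mab Pab x :=
  CI_fusion_weighted_gaussian_pair_general ma mb Pa Pb hPa hPb αa αb hαa hαb ω hω Pab mab αab hPab
    hmab hαab
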